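/- The subgroup K = {A = (a, b; c, d) ∈ Γ(2) : c ≡ 0 (mod 6)} has index 4 in Γ(2). (This is the index |G_∞ : G_∞ ∩ G_∞^{M_3}| for the degree-3 classical modular equation.) -/

import Mathlib

open Matrix CongruenceSubgroup

/-- The subgroup of `SL(2, ℤ)` of matrices whose lower-left entry is divisible by `n`. -/
def lowerLeftDvd (n : ℤ) : Subgroup (Matrix.SpecialLinearGroup (Fin 2) ℤ) where
  carrier := {A | n ∣ (A : Matrix (Fin 2) (Fin 2) ℤ) 1 0}
  one_mem' := by simp
  mul_mem' := by
    intro A B hA hB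
    have h : ((A * B : Matrix.SpecialLinearGroup (Fin 2) ℤ) : Matrix (Fin 2) (Fin 2) ℤ) 1 0 =
        (A : Matrix (Fin 2) (Fin 2) ℤ) 1 0 * (B : Matrix (Fin 2) (Fin 2) ℤ) 0 0 +
        (A : Matrix (Fin 2) (Fin 2) ℤ) 1 1 * (B : Matrix (Fin 2) (Fin 2) ℤ) 1 0 := by
      rw [Matrix.SpecialLinearGroup.coe_mul, Matrix.mul_apply, Fin.sum_univ_two]
    rw [Set.mem_setOf_eq, h]
    exact dvd_add (hA.mul_right _) (hB.mul_left _)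
  inv_mem' := by
    intro A hA
    have h : ((A⁻¹ : Matrix.SpecialLinearGroup (Fin 2) ℤ) : Matrix (Fin 2) (Fin 2) ℤ) 1 0 =
        -((A : Matrix (Fin 2) (Fin 2) ℤ) 1 0) := by
      rw [Matrix.SpecialLinearGroup.coe_inv, Matrix.adjugate_fin_two]
      simp
    rw [Set.mem_setOf_eq, h]
    exact dvd_neg.mpr hA

/-!
Reduction mod `p` lets `Γ(2)` act on the projective line `ℙ¹(𝔽_p)` through `SL(2, 𝔽_p)`, and
`Γ₀(p)` is the stabilizer of `[1 : 0]`. For odd `p`, the entry `c` of an element of `Γ(2)` is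
even, so `2p ∣ c ↔ p ∣ c`; hence `K = Γ(2) ∩ Γ₀(3)` is a stabilizer and its index in `Γ(2)` is
the length of the orbit. As `2` is a unit mod `p`, every transvection of `SL(2, 𝔽_p)` lifts to
`Γ(2)`, and transvections already move `[1 : 0]` to every point, so the index is
`|ℙ¹(𝔽_p)| = p + 1`.
-/

open Matrix.SpecialLinearGroup
open scoped LinearAlgebra.Projectivization MatrixGroups

theorem MulAction.relIndex_stabilizer_of_forall_exists_smul_eq {G X : Type*} [Group G]
    [MulAction G X] (H : Subgroup G) (x : X) (hH : ∀ y : X, ∃ g ∈ H, g • x = y) :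
    (stabilizer G x).relIndex H = Nat.card X := by
  have hstab : (stabilizer G x).subgroupOf H = stabilizer H x := by
    ext; simp [Subgroup.mem_subgroupOf, Subgroup.smul_def]
  have horbit : orbit H x = Set.univ := Set.eq_univ_of_forall fun y ↦ by
    obtain ⟨g, hg, rfl⟩ := hH y
    exact ⟨⟨g, hg⟩, rfl⟩
  rw [Subgroup.relIndex, hstab, index_stabilizer, horbit, Set.ncard_univ]

theorem Matrix.SpecialLinearGroup.map_transvection {ι R S : Type*} [DecidableEq ι] [Fintype ι]
    [CommRing R] [CommRing S] (f : R →+* S) {i j : ι} (hij : i ≠ j) (b : R) :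
    map f (transvection hij b) = transvection hij (f b) := by
  ext k l
  simp [transvection_coe, Matrix.one_apply, Matrix.single_apply, apply_ite f]

theorem ZMod.exists_intCast_two_mul_eq {p : ℕ} (hp : Odd p) (b : ZMod p) :
    ∃ k : ℤ, ((2 * k : ℤ) : ZMod p) = b := by
  obtain ⟨m, rfl⟩ := hp
  obtain ⟨c, rfl⟩ := ZMod.intCast_surjective b
  refine ⟨(m + 1) * c, ?_⟩
  have h : ((2 * m + 1 : ℕ) : ZMod (2 * m + 1)) = 0 := ZMod.natCast_self _
  push_cast at h ⊢
  linear_combination c * h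

namespace Projectivization

variable {F : Type*} [Field F]

theorem smul_mk_single_zero_eq_iff (g : SL(2, F)) :
    g • mk F (Pi.single 0 1 : Fin 2 → F) (by simp) = mk F (Pi.single 0 1) (by simp) ↔
      g 1 0 = 0 := by
  have hcol : g • (Pi.single 0 1 : Fin 2 → F) = ![g 0 0, g 1 0] := by
    ext i; fin_cases i <;> simp [Matrix.SpecialLinearGroup.smul_def]
  rw [smul_mk, mk_eq_mk_iff', hcol]
  constructor
  · rintro ⟨a, ha⟩
    simpa using (congrFun ha 1).symm
  · intro h
    refine ⟨g 0 0, ?_⟩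
    ext i; fin_cases i <;> simp [h]

theorem exists_mem_smul_mk_single_zero_eq {H : Subgroup SL(2, F)}
    (hH : ∀ {i j : Fin 2} (hij : i ≠ j) (b : F), transvection hij b ∈ H) (y : ℙ F (Fin 2 → F)) :
    ∃ g ∈ H, g • mk F (Pi.single 0 1 : Fin 2 → F) (by simp) = y := by
  induction y using Projectivization.ind with | h v hv => ?_
  have h01 : (0 : Fin 2) ≠ 1 := by decide
  by_cases hv0 : v 0 = 0
  · have hv1 : v 1 ≠ 0 := fun hv1 ↦ hv (by ext i; fin_cases i <;> simp [hv0, hv1])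
    refine ⟨transvection h01 (-1) * transvection h01.symm 1, mul_mem (hH _ _) (hH _ _), ?_⟩
    rw [smul_mk, mk_eq_mk_iff']
    refine ⟨(v 1)⁻¹, ?_⟩
    rw [mul_smul, transvection_smul_single_snd, smul_add, transvection_smul_single_fst, one_smul,
      transvection_smul_single_snd]
    ext i; fin_cases i <;> simp [hv0, hv1]
  · refine ⟨transvection h01.symm (v 1 / v 0), hH _ _, ?_⟩
    rw [smul_mk, mk_eq_mk_iff', transvection_smul_single_snd]
    refine ⟨(v 0)⁻¹, ?_⟩
    ext i; fin_cases i <;> simp [hv0]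
    field_simp

end Projectivization

namespace CongruenceSubgroup

theorem transvection_mem_map_Gamma_two {p : ℕ} (hp : Odd p) {i j : Fin 2} (hij : i ≠ j)
    (b : ZMod p) : transvection hij b ∈ (Gamma 2).map (map (Int.castRingHom (ZMod p))) := by
  obtain ⟨k, rfl⟩ := ZMod.exists_intCast_two_mul_eq hp b
  refine ⟨transvection hij (2 * k), ?_, map_transvection _ hij _⟩
  rw [SetLike.mem_coe, Gamma_mem]
  have h2 : (2 : ZMod 2) = 0 := rfl
  fin_cases i <;> fin_cases j <;> simp_all [transvection_coe]

theorem Gamma0_eq_comap_stabilizer (p : ℕ) [Fact p.Prime] :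
    Gamma0 p = (MulAction.stabilizer SL(2, ZMod p)
      (Projectivization.mk (ZMod p) (Pi.single 0 1 : Fin 2 → ZMod p) (by simp))).comap
        (map (Int.castRingHom (ZMod p))) := by
  ext g
  rw [Gamma0_mem, Subgroup.mem_comap, MulAction.mem_stabilizer_iff,
    Projectivization.smul_mk_single_zero_eq_iff]
  rfl

theorem Gamma_two_inf_lowerLeftDvd {p : ℕ} (hp : Odd p) :
    Gamma 2 ⊓ lowerLeftDvd (2 * p) = Gamma 2 ⊓ Gamma0 p := by
  ext g
  simp only [Subgroup.mem_inf, and_congr_right_iff]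
  intro hg
  have h2 : (2 : ℤ) ∣ g 1 0 :=
    (ZMod.intCast_zmod_eq_zero_iff_dvd _ 2).mp (Gamma_mem.mp hg).2.2.1
  have hcop : IsCoprime (2 : ℤ) p := by
    rw [Int.isCoprime_iff_gcd_eq_one]
    exact_mod_cast Nat.coprime_two_left.mpr hp
  rw [Gamma0_mem, ZMod.intCast_zmod_eq_zero_iff_dvd]
  exact ⟨fun h ↦ (dvd_mul_left _ _).trans h, hcop.mul_dvd h2⟩

theorem relIndex_Gamma_two_inf_Gamma0 (p : ℕ) [Fact p.Prime] (hp : Odd p) :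
    (Gamma 2 ⊓ Gamma0 p).relIndex (Gamma 2) = p + 1 := by
  rw [Subgroup.inf_relIndex_left, Gamma0_eq_comap_stabilizer, Subgroup.relIndex_comap,
    MulAction.relIndex_stabilizer_of_forall_exists_smul_eq _ _
      (Projectivization.exists_mem_smul_mk_single_zero_eq (transvection_mem_map_Gamma_two hp)),
    Projectivization.card_of_finrank_two _ _ (Module.finrank_fin_fun _), Nat.card_zmod]

end CongruenceSubgroup

theorem index_K_in_Gamma2_eq_four :
    ((Gamma 2 ⊓ lowerLeftDvd 6).relIndex (Gamma 2)) = 4 := by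
  rw [show (6 : ℤ) = 2 * (3 : ℕ) by norm_num, Gamma_two_inf_lowerLeftDvd (by decide),
    relIndex_Gamma_two_inf_Gamma0 3 (by decide)]
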